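/- Let 0 < e < 1 and define e' by 1 − e' = σ̂(1 − e) with σ̂(ρ) = (√(1-ρ²)+(π-arccos ρ)ρ)/π. Then 0 < e' < e, so the sequence e_ℓ defined by e_0 ∈ (0,1) and e_{ℓ} = 1 − σ̂(1 − e_{ℓ-1}) is strictly decreasing and converges to 0, and moreover e_ℓ/e_{ℓ-1} → 1 as ℓ → ∞ (sublinear convergence). -/

import Mathlib

open Real Filter Set Topology

/-- Dual activation of the normalized ReLU. -/
noncomputable def hatSigma (ρ : ℝ) : ℝ :=
  (Real.sqrt (1 - ρ ^ 2) + (π - Real.arccos ρ) * ρ) / π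

/-!
Put `θ = arccos ρ`, so that `√(1 - ρ²) = sin θ` and `π (σ̂(ρ) - ρ) = sin θ - θ ρ`.
Since `θ cos θ < sin θ ≤ θ` on `(0, π)`, this gives
`0 < σ̂(ρ) - ρ ≤ θ (1 - ρ) / π`. For the error `e = 1 - ρ` and `e' = 1 - σ̂(ρ)` this reads
`(1 - θ / π) e ≤ e' < e`, and `θ < π` makes `e'` positive. The iterates therefore decrease to a
fixed point of the continuous map `e ↦ e'` in `[0, 1)`, which can only be `0`; and since `θ → 0`
as `e → 0`, the ratio `e' / e` is squeezed to `1`.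
-/

theorem mul_cos_lt_sin {θ : ℝ} (h0 : 0 < θ) (hπ : θ < π) : θ * cos θ < sin θ := by
  rcases lt_or_ge θ (π / 2) with hθ | hθ
  · have hcos : 0 < cos θ := cos_pos_of_mem_Ioo ⟨by linarith, hθ⟩
    have := lt_tan h0 hθ
    rwa [tan_eq_sin_div_cos, lt_div_iff₀ hcos] at this
  · have hcos : cos θ ≤ 0 := cos_nonpos_of_pi_div_two_le_of_le hθ (by linarith)
    nlinarith [sin_pos_of_pos_of_lt_pi h0 hπ]

theorem pi_mul_hatSigma_sub_self (ρ : ℝ) :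
    π * (hatSigma ρ - ρ) = sin (arccos ρ) - arccos ρ * ρ := by
  rw [hatSigma, sin_arccos]
  field_simp
  ring

theorem self_lt_hatSigma {ρ : ℝ} (h₁ : -1 < ρ) (h₂ : ρ < 1) : ρ < hatSigma ρ := by
  have key := mul_cos_lt_sin (arccos_pos.2 h₂) (arccos_lt_pi.2 h₁)
  rw [cos_arccos h₁.le h₂.le, ← sub_pos, ← pi_mul_hatSigma_sub_self] at key
  exact sub_pos.1 (pos_of_mul_pos_right key pi_pos.le)

theorem hatSigma_sub_self_le (ρ : ℝ) : hatSigma ρ - ρ ≤ arccos ρ * (1 - ρ) / π := by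
  rw [le_div_iff₀ pi_pos, mul_comm, pi_mul_hatSigma_sub_self]
  linarith [sin_le (arccos_nonneg ρ)]

theorem continuous_hatSigma : Continuous hatSigma := by
  unfold hatSigma
  fun_prop

noncomputable def errorMap (e : ℝ) : ℝ := 1 - hatSigma (1 - e)

theorem errorMap_lt_self {e : ℝ} (h₀ : 0 < e) (h₂ : e < 2) : errorMap e < e := by
  have := self_lt_hatSigma (ρ := 1 - e) (by linarith) (by linarith)
  rw [errorMap]
  linarith

theorem one_sub_arccos_div_pi_mul_le_errorMap (e : ℝ) :
    (1 - arccos (1 - e) / π) * e ≤ errorMap e := by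
  have := hatSigma_sub_self_le (1 - e)
  rw [sub_sub_cancel] at this
  rw [errorMap]
  linarith [mul_div_right_comm (arccos (1 - e)) e π]

theorem errorMap_pos {e : ℝ} (h₀ : 0 < e) (h₂ : e < 2) : 0 < errorMap e := by
  have hθ : arccos (1 - e) / π < 1 := (div_lt_one pi_pos).2 (arccos_lt_pi.2 (by linarith))
  exact (mul_pos (sub_pos.2 hθ) h₀).trans_le (one_sub_arccos_div_pi_mul_le_errorMap e)

theorem continuous_errorMap : Continuous errorMap :=
  continuous_const.sub (continuous_hatSigma.comp (continuous_const.sub continuous_id))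

theorem tendsto_errorMap_div_self : Tendsto (fun e => errorMap e / e) (𝓝[>] 0) (𝓝 1) := by
  have hlower : Tendsto (fun e => 1 - arccos (1 - e) / π) (𝓝[>] 0) (𝓝 1) := by
    have hc : Continuous fun e : ℝ => 1 - arccos (1 - e) / π := by fun_prop
    simpa using (hc.tendsto 0).mono_left nhdsWithin_le_nhds
  refine tendsto_of_tendsto_of_tendsto_of_le_of_le' hlower tendsto_const_nhds ?_ ?_
  all_goals
    filter_upwards [Ioo_mem_nhdsGT (show (0 : ℝ) < 2 by norm_num)] with e ⟨h₀, h₂⟩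
  · exact (le_div_iff₀ h₀).2 (one_sub_arccos_div_pi_mul_le_errorMap e)
  · exact (div_le_one h₀).2 (errorMap_lt_self h₀ h₂).le

section Iterates

variable {f : ℝ → ℝ} {a : ℝ} {u : ℕ → ℝ}

theorem mem_Ioo_of_forall_mapsTo_Ioo (hf : ∀ x ∈ Ioo 0 a, f x ∈ Ioo 0 x)
    (hu₀ : u 0 ∈ Ioo 0 a) (hu : ∀ n, u (n + 1) = f (u n)) (n : ℕ) : u n ∈ Ioo 0 a := by
  induction n with
  | zero => exact hu₀
  | succ n ih =>
    obtain ⟨hpos, hlt⟩ := hf _ ih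
    rw [hu]
    exact ⟨hpos, hlt.trans ih.2⟩

theorem strictAnti_and_tendsto_zero_of_forall_mapsTo_Ioo (hc : Continuous f)
    (hf : ∀ x ∈ Ioo 0 a, f x ∈ Ioo 0 x) (hu₀ : u 0 ∈ Ioo 0 a) (hu : ∀ n, u (n + 1) = f (u n)) :
    StrictAnti u ∧ Tendsto u atTop (𝓝 0) := by
  have hmem := mem_Ioo_of_forall_mapsTo_Ioo hf hu₀ hu
  have hanti : StrictAnti u := strictAnti_nat_of_succ_lt fun n => hu n ▸ (hf _ (hmem n)).2
  have hbdd : BddBelow (range u) := ⟨0, forall_mem_range.2 fun n => (hmem n).1.le⟩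
  have hlim := tendsto_atTop_ciInf hanti.antitone hbdd
  set L := ⨅ n, u n
  have hfix : f L = L := by
    have h := (hc.tendsto L).comp hlim
    simp only [Function.comp_def, ← hu] at h
    exact tendsto_nhds_unique h (hlim.comp (tendsto_add_atTop_nat 1))
  have hL : L = 0 := by
    refine (le_ciInf fun n => (hmem n).1.le).eq_or_lt.elim Eq.symm fun hpos => ?_
    have hLa : L < a := (ciInf_le hbdd 0).trans_lt hu₀.2
    exact absurd hfix (hf L ⟨hpos, hLa⟩).2.ne
  exact ⟨hanti, hL ▸ hlim⟩

end Iterates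

/-- For e ∈ (0,1), the error map e ↦ 1 - σ̂(1-e) maps into (0,e); consequently
the iterates e_ℓ = 1 - σ̂(1 - e_{ℓ-1}) from e₀ ∈ (0,1) are strictly decreasing,
tend to 0, and satisfy e_ℓ/e_{ℓ-1} → 1 (sublinear convergence). -/
theorem error_iterates_sublinear :
    (∀ e : ℝ, e ∈ Set.Ioo (0 : ℝ) 1 →
      0 < 1 - hatSigma (1 - e) ∧ 1 - hatSigma (1 - e) < e) ∧
    ∀ e : ℕ → ℝ, e 0 ∈ Set.Ioo (0 : ℝ) 1 →
      (∀ n : ℕ, e (n + 1) = 1 - hatSigma (1 - e n)) →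
      StrictAnti e ∧ Tendsto e atTop (nhds 0) ∧
        Tendsto (fun n => e (n + 1) / e n) atTop (nhds 1) := by
  have hmaps : ∀ x ∈ Ioo (0 : ℝ) 1, errorMap x ∈ Ioo 0 x := fun x ⟨h₀, h₁⟩ =>
    ⟨errorMap_pos h₀ (by linarith), errorMap_lt_self h₀ (by linarith)⟩
  refine ⟨hmaps, fun e he₀ he => ?_⟩
  obtain ⟨hanti, hlim⟩ :=
    strictAnti_and_tendsto_zero_of_forall_mapsTo_Ioo continuous_errorMap hmaps he₀ he
  have hpos : ∀ n, 0 < e n := fun n => (mem_Ioo_of_forall_mapsTo_Ioo hmaps he₀ he n).1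
  have hlim' : Tendsto e atTop (𝓝[>] 0) :=
    tendsto_nhdsWithin_iff.2 ⟨hlim, Eventually.of_forall hpos⟩
  refine ⟨hanti, hlim, ?_⟩
  simpa only [he, errorMap, Function.comp_def] using tendsto_errorMap_div_self.comp hlim'
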